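/- Let F be a field of characteristic zero and n ≥ 1, and consider the doubling embedding of Sp_{2n} × Sp_{2n} into Sp_{4n} with Siegel parabolic P_Δ stabilizing the diagonal Lagrangian and Weyl element w_Δ = (I_{2n}, −I_{2n}). Write n_Δ = g₀^{−1} n_std g₀ ∈ N_Δ(F) with n_std = (I_{2n}, X; 0, I_{2n}) for X ∈ Sym²(F^{2n}), where g₀ ∈ Sp_{4n}(F) is the fixed element carrying the standard Lagrangian to the diagonal Lagrangian. Then, whenever 2 J_n X − I_{2n} is invertible, the decomposition w_Δ n_Δ = p_Δ · (h, I_{2n}) with p_Δ ∈ P_Δ(F) and h ∈ Sp_{2n}(F) holds with h given by the Cayley transform h = (2 J_n X + I_{2n})(2 J_n X − I_{2n})^{−1}, where J_n = (0, I_n; −I_n, 0). -/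
import Mathlib


/-!
STATEMENT 18 (Jiang–Luo–Zhang, Lemma 6.2):
In the doubling setup for `Sp_{2n} × Sp_{2n} ⊂ Sp_{4n}`, with the diagonal Siegel parabolic
`P_Δ`, Weyl element `w_Δ = (I_{2n}, -I_{2n})`, and `n_Δ = g₀⁻¹ n_std(X) g₀`, the
decomposition `w_Δ n_Δ = p_Δ · (h, I_{2n})` holds, whenever `2 J_n X − I_{2n}` is
invertible, with `h` given by the Cayley transform
`h = (2 J_n X + I_{2n})(2 J_n X − I_{2n})^{-1}`.
-/

open Matrix

noncomputable section

namespace JLZ18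

variable (n : ℕ) (F : Type*) [Field F]

/-- The matrix `J_n = [[0, I_n], [-I_n, 0]]` of the symplectic form on `V = F^{2n}`. -/
def Jmat : Matrix (Fin n ⊕ Fin n) (Fin n ⊕ Fin n) F :=
  fromBlocks 0 1 (-1) 0

/-- The matrix `J_{2n}` of the symplectic form on the doubled space `W = V⁺ ⊕ V⁻`, in the
ordered basis `{e_1,…,e_n, f_1,…,f_n, e_{n+1},…,e_{2n}, -f_{n+1},…,-f_{2n}}`. -/
def JW : Matrix ((Fin n ⊕ Fin n) ⊕ (Fin n ⊕ Fin n))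
    ((Fin n ⊕ Fin n) ⊕ (Fin n ⊕ Fin n)) F :=
  fromBlocks 0 1 (-1) 0

/-- The embedding `Sp_{2n} × {I_{2n}} → Sp_{4n}`, `h = (A,B;C,D) ↦` the `4n × 4n` matrix
`(A,0,B,0; 0,I,0,0; C,0,D,0; 0,0,0,I)` of \eqref{embsp}. -/
def emb (h : Matrix (Fin n ⊕ Fin n) (Fin n ⊕ Fin n) F) :
    Matrix ((Fin n ⊕ Fin n) ⊕ (Fin n ⊕ Fin n))
      ((Fin n ⊕ Fin n) ⊕ (Fin n ⊕ Fin n)) F :=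
  fromBlocks (fromBlocks h.toBlocks₁₁ 0 0 1) (fromBlocks h.toBlocks₁₂ 0 0 0)
    (fromBlocks h.toBlocks₂₁ 0 0 0) (fromBlocks h.toBlocks₂₂ 0 0 1)

/-- The fixed element `g₀ ∈ Sp_{4n}(F)` taking the standard Lagrangian to the diagonal
Lagrangian `L_Δ`, so that `P_Δ = g₀^{-1} P_std g₀`. -/
def g0 : Matrix ((Fin n ⊕ Fin n) ⊕ (Fin n ⊕ Fin n))
    ((Fin n ⊕ Fin n) ⊕ (Fin n ⊕ Fin n)) F :=
  fromBlocks
    (fromBlocks 0 0 ((2 : F)⁻¹ • 1) (-((2 : F)⁻¹ • 1)))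
    (fromBlocks (-((2 : F)⁻¹ • 1)) (-((2 : F)⁻¹ • 1)) 0 0)
    (fromBlocks 1 1 0 0)
    (fromBlocks 0 0 1 (-1))

/-- The Weyl element `w_Δ = (I_{2n}, -I_{2n}) = diag(I_n, -I_n, I_n, -I_n)` taking `P_Δ`
to its opposite. -/
def wDelta : Matrix ((Fin n ⊕ Fin n) ⊕ (Fin n ⊕ Fin n))
    ((Fin n ⊕ Fin n) ⊕ (Fin n ⊕ Fin n)) F :=
  fromBlocks (fromBlocks 1 0 0 (-1)) 0 0 (fromBlocks 1 0 0 (-1))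

/-- The unipotent element `n_std(X) = [[I_{2n}, X], [0, I_{2n}]]` of the standard Siegel
parabolic `P_std`, attached to `X ∈ Sym²(F^{2n})`. -/
def nstd (X : Matrix (Fin n ⊕ Fin n) (Fin n ⊕ Fin n) F) :
    Matrix ((Fin n ⊕ Fin n) ⊕ (Fin n ⊕ Fin n))
      ((Fin n ⊕ Fin n) ⊕ (Fin n ⊕ Fin n)) F :=
  fromBlocks 1 X 0 1

/-- The Cayley transform `h = (2 J_n X + I_{2n})(2 J_n X − I_{2n})^{-1}`. -/
def cayley (X : Matrix (Fin n ⊕ Fin n) (Fin n ⊕ Fin n) F) :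
    Matrix (Fin n ⊕ Fin n) (Fin n ⊕ Fin n) F :=
  ((2 : F) • (Jmat n F * X) + 1) * ((2 : F) • (Jmat n F * X) - 1)⁻¹

theorem JmatT : (Jmat n F)ᵀ = -Jmat n F := by
  simp [Jmat, fromBlocks_transpose, fromBlocks_neg]

theorem Jmat2 : Jmat n F * Jmat n F = -1 := by
  rw [show (-1 : Matrix (Fin n ⊕ Fin n) (Fin n ⊕ Fin n) F) = fromBlocks (-1) 0 0 (-1) by
    rw [← fromBlocks_one, fromBlocks_neg]; simp]
  simp [Jmat, fromBlocks_multiply]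


def Ginv : Matrix ((Fin n ⊕ Fin n) ⊕ (Fin n ⊕ Fin n))
    ((Fin n ⊕ Fin n) ⊕ (Fin n ⊕ Fin n)) F :=
  fromBlocks
    (fromBlocks 0 1 0 (-1))
    (fromBlocks ((2 : F)⁻¹ • 1) 0 ((2 : F)⁻¹ • 1) 0)
    (fromBlocks (-1) 0 (-1) 0)
    (fromBlocks 0 ((2 : F)⁻¹ • 1) 0 (-((2 : F)⁻¹ • 1)))

theorem g0_mul_Ginv [CharZero F] : g0 n F * Ginv n F = 1 := by
  have h2 : (2:F)⁻¹ • (1 : Matrix (Fin n) (Fin n) F) + (2:F)⁻¹ • 1 = 1 := by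
    rw [← add_smul]; norm_num
  rw [g0, Ginv]
  simp only [← fromBlocks_one]
  simp [fromBlocks_multiply, fromBlocks_add, fromBlocks_inj, smul_smul, h2]


theorem negone_blocks :
    fromBlocks (-1 : Matrix (Fin n) (Fin n) F) 0 0 (-1)
      = (-1 : Matrix (Fin n ⊕ Fin n) (Fin n ⊕ Fin n) F) := by
  rw [← fromBlocks_one, fromBlocks_neg]; simp

theorem half_add_half [CharZero F] :
    (2:F)⁻¹ • (1 : Matrix (Fin n) (Fin n) F) + (2:F)⁻¹ • 1 = 1 := by
  rw [← add_smul]; norm_num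

theorem neg_half_add_neg_half [CharZero F] :
    -((2:F)⁻¹ • (1 : Matrix (Fin n) (Fin n) F)) + -((2:F)⁻¹ • 1) = -1 := by
  rw [← neg_add, half_add_half]

theorem sympl_wDelta : wDelta n F * JW n F * (wDelta n F)ᵀ = JW n F := by
  rw [wDelta, JW]
  simp only [← fromBlocks_one]
  simp [fromBlocks_multiply, fromBlocks_transpose, fromBlocks_neg, fromBlocks_inj,
    negone_blocks]

theorem sympl_g0 [CharZero F] : g0 n F * JW n F * (g0 n F)ᵀ = JW n F := by
  rw [g0, JW]
  simp only [← fromBlocks_one]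
  simp [fromBlocks_multiply, fromBlocks_transpose, fromBlocks_neg, fromBlocks_add,
    fromBlocks_inj, smul_smul, half_add_half, neg_half_add_neg_half, transpose_smul,
    negone_blocks]

theorem sympl_nstd (X : Matrix (Fin n ⊕ Fin n) (Fin n ⊕ Fin n) F) (hX : Xᵀ = X) :
    nstd n F X * JW n F * (nstd n F X)ᵀ = JW n F := by
  rw [nstd, JW]
  simp only [← fromBlocks_one]
  simp [fromBlocks_multiply, fromBlocks_transpose, fromBlocks_neg, fromBlocks_add,
    fromBlocks_inj, hX]



variable {n F}

theorem Junit : IsUnit (Jmat n F) := by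
  have h : Jmat n F * (-(Jmat n F)) = 1 := by rw [mul_neg, Jmat2, neg_neg]
  have := invertibleOfRightInverse _ _ h
  exact isUnit_of_invertible _

variable {X : Matrix (Fin n ⊕ Fin n) (Fin n ⊕ Fin n) F}

theorem MT (hX : Xᵀ = X) :
    ((2:F) • (Jmat n F * X))ᵀ = -((2:F) • (X * Jmat n F)) := by
  rw [transpose_smul, transpose_mul, JmatT, hX]
  simp [mul_neg]

theorem MJ (hX : Xᵀ = X) : Jmat n F * ((2:F) • (Jmat n F * X))ᵀ
    = -(((2:F) • (Jmat n F * X)) * Jmat n F) := by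
  rw [MT hX]
  simp [mul_neg, mul_smul_comm, smul_mul_assoc, mul_assoc]

theorem key_u (hX : Xᵀ = X) : Jmat n F * ((2:F) • (Jmat n F * X) - 1)ᵀ
    = -(((2:F) • (Jmat n F * X) + 1) * Jmat n F) := by
  rw [transpose_sub, transpose_one, mul_sub, MJ hX, mul_one, add_mul, one_mul, neg_add]
  abel

theorem key_v (hX : Xᵀ = X) : Jmat n F * ((2:F) • (Jmat n F * X) + 1)ᵀ
    = -(((2:F) • (Jmat n F * X) - 1) * Jmat n F) := by
  rw [transpose_add, transpose_one, mul_add, MJ hX, mul_one, sub_mul, one_mul, neg_sub]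
  abel

theorem uT_unit (hinv : IsUnit ((2 : F) • (Jmat n F * X) - 1)) :
    IsUnit (((2:F) • (Jmat n F * X) - 1)ᵀ) := by
  rw [Matrix.isUnit_iff_isUnit_det, Matrix.det_transpose,
    ← Matrix.isUnit_iff_isUnit_det]
  exact hinv

theorem v_unit (hX : Xᵀ = X) (hinv : IsUnit ((2 : F) • (Jmat n F * X) - 1)) :
    IsUnit ((2:F) • (Jmat n F * X) + 1) := by
  have hv_eq : (2:F) • (Jmat n F * X) + 1
      = Jmat n F * ((2:F) • (Jmat n F * X) - 1)ᵀ * Jmat n F := by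
    rw [key_u hX, neg_mul, mul_assoc, Jmat2, mul_neg, mul_one, neg_neg]
  rw [hv_eq]
  exact (Junit.mul (uT_unit hinv)).mul Junit

theorem comm_pm (A : Matrix (Fin n ⊕ Fin n) (Fin n ⊕ Fin n) F) :
    (A - 1) * (A + 1) = (A + 1) * (A - 1) := by noncomm_ring

theorem cayley_mul_inv (hX : Xᵀ = X) (hinv : IsUnit ((2 : F) • (Jmat n F * X) - 1)) :
    cayley n F X * (((2:F) • (Jmat n F * X) - 1) * ((2:F) • (Jmat n F * X) + 1)⁻¹)
      = 1 := by
  have hu := (Matrix.isUnit_iff_isUnit_det _).1 hinv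
  have hv := (Matrix.isUnit_iff_isUnit_det _).1 (v_unit hX hinv)
  rw [cayley, mul_assoc, ← mul_assoc (((2:F) • (Jmat n F * X) - 1)⁻¹),
    Matrix.nonsing_inv_mul _ hu, one_mul, Matrix.mul_nonsing_inv _ hv]

theorem cayley_inv (hX : Xᵀ = X) (hinv : IsUnit ((2 : F) • (Jmat n F * X) - 1)) :
    (cayley n F X)⁻¹
      = ((2:F) • (Jmat n F * X) - 1) * ((2:F) • (Jmat n F * X) + 1)⁻¹ :=
  Matrix.inv_eq_right_inv (cayley_mul_inv hX hinv)

theorem cayley_inv_mul (hX : Xᵀ = X) (hinv : IsUnit ((2 : F) • (Jmat n F * X) - 1)) :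
    (cayley n F X)⁻¹ * cayley n F X = 1 := by
  have hu := (Matrix.isUnit_iff_isUnit_det _).1 hinv
  have hv := (Matrix.isUnit_iff_isUnit_det _).1 (v_unit hX hinv)
  rw [cayley_inv hX hinv, cayley, mul_assoc, ← mul_assoc (((2:F) • (Jmat n F * X) + 1)⁻¹),
    Matrix.nonsing_inv_mul _ hv, one_mul, Matrix.mul_nonsing_inv _ hu]

theorem u_mul_cayley (hX : Xᵀ = X) (hinv : IsUnit ((2 : F) • (Jmat n F * X) - 1)) :
    ((2:F) • (Jmat n F * X) - 1) * cayley n F X = (2:F) • (Jmat n F * X) + 1 := by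
  have hu := (Matrix.isUnit_iff_isUnit_det _).1 hinv
  rw [cayley, ← mul_assoc, comm_pm, mul_assoc, Matrix.mul_nonsing_inv _ hu, mul_one]

theorem uJu (hX : Xᵀ = X) :
    ((2:F) • (Jmat n F * X) - 1) * Jmat n F * ((2:F) • (Jmat n F * X) - 1)ᵀ
      = ((2:F) • (Jmat n F * X) + 1) * Jmat n F * ((2:F) • (Jmat n F * X) + 1)ᵀ := by
  have h1 := MJ (n := n) (F := F) hX
  rw [transpose_sub, transpose_add, transpose_one]
  simp only [sub_mul, mul_sub, add_mul, mul_add, mul_one, one_mul, mul_assoc, h1, mul_neg]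
  abel

theorem cayley_symplectic (hX : Xᵀ = X)
    (hinv : IsUnit ((2 : F) • (Jmat n F * X) - 1)) :
    cayley n F X * Jmat n F * (cayley n F X)ᵀ = Jmat n F := by
  set u := (2:F) • (Jmat n F * X) - 1 with hu_def
  have hu := (Matrix.isUnit_iff_isUnit_det _).1 hinv
  haveI iu : Invertible u := u.invertibleOfIsUnitDet hu
  haveI iuT : Invertible uᵀ := uᵀ.invertibleOfIsUnitDet
    ((Matrix.isUnit_iff_isUnit_det _).1 (uT_unit hinv))
  apply Matrix.mul_right_injective_of_invertible u
  apply Matrix.mul_left_injective_of_invertible uᵀ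
  show u * (cayley n F X * Jmat n F * (cayley n F X)ᵀ) * uᵀ = u * Jmat n F * uᵀ
  calc u * (cayley n F X * Jmat n F * (cayley n F X)ᵀ) * uᵀ
      = (u * cayley n F X) * Jmat n F * ((u * cayley n F X)ᵀ) := by
        rw [transpose_mul]; simp only [mul_assoc]
    _ = ((2:F) • (Jmat n F * X) + 1) * Jmat n F * ((2:F) • (Jmat n F * X) + 1)ᵀ := by
        rw [hu_def, u_mul_cayley hX hinv]
    _ = u * Jmat n F * uᵀ := (uJu hX).symm

variable (n F)


def Qmat (X K : Matrix (Fin n ⊕ Fin n) (Fin n ⊕ Fin n) F) :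
    Matrix ((Fin n ⊕ Fin n) ⊕ (Fin n ⊕ Fin n))
      ((Fin n ⊕ Fin n) ⊕ (Fin n ⊕ Fin n)) F :=
  fromBlocks
    (fromBlocks ((2:F)⁻¹ • (K.toBlocks₂₂ - 1)) (-((2:F)⁻¹ • K.toBlocks₂₁))
      (-((2:F)⁻¹ • K.toBlocks₁₂)) ((2:F)⁻¹ • (K.toBlocks₁₁ - 1)))
    (fromBlocks (-((4:F)⁻¹ • K.toBlocks₂₁)) (-((4:F)⁻¹ • (K.toBlocks₂₂ + 1)))
      ((4:F)⁻¹ • (K.toBlocks₁₁ + 1)) ((4:F)⁻¹ • K.toBlocks₁₂))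
    0
    (fromBlocks ((2:F) • X.toBlocks₂₁ - 1) ((2:F) • X.toBlocks₂₂)
      (-((2:F) • X.toBlocks₁₁)) (-((2:F) • X.toBlocks₁₂) - 1))

variable {n F}

theorem fromBlocks_sub' (A B C D A' B' C' D' : Matrix (Fin n) (Fin n) F) :
    fromBlocks A B C D - fromBlocks A' B' C' D' =
      fromBlocks (A - A') (B - B') (C - C') (D - D') := by
  rw [sub_eq_add_neg, fromBlocks_neg, fromBlocks_add]
  simp [sub_eq_add_neg]

theorem eq3 [CharZero F] (hX : Xᵀ = X)
    (hinv : IsUnit ((2 : F) • (Jmat n F * X) - 1)) :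
    wDelta n F * (Ginv n F * nstd n F X * g0 n F)
      = Ginv n F * Qmat n F X (cayley n F X)⁻¹ * g0 n F * emb n F (cayley n F X) := by
  have hKh := cayley_inv_mul hX hinv
  have huh := u_mul_cayley hX hinv
  set h := cayley n F X with hh
  -- blocks of h⁻¹ * h = 1
  have hKh' : fromBlocks (h⁻¹.toBlocks₁₁) (h⁻¹.toBlocks₁₂) (h⁻¹.toBlocks₂₁)
        (h⁻¹.toBlocks₂₂)
      * fromBlocks (h.toBlocks₁₁) (h.toBlocks₁₂) (h.toBlocks₂₁) (h.toBlocks₂₂)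
      = fromBlocks 1 0 0 1 := by
    rw [fromBlocks_toBlocks, fromBlocks_toBlocks, fromBlocks_one]; exact hKh
  rw [fromBlocks_multiply, fromBlocks_inj] at hKh'
  obtain ⟨r1, r2, r3, r4⟩ := hKh'
  -- blocks of (M-1) * h = M+1
  have hM : (2:F) • (Jmat n F * X)
      = fromBlocks ((2:F) • X.toBlocks₂₁) ((2:F) • X.toBlocks₂₂)
        (-((2:F) • X.toBlocks₁₁)) (-((2:F) • X.toBlocks₁₂)) := by
    conv_lhs => rw [← fromBlocks_toBlocks X]
    rw [Jmat]
    simp [fromBlocks_multiply, fromBlocks_smul, smul_neg]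
  have hu_b : (2:F) • (Jmat n F * X) - 1
      = fromBlocks ((2:F) • X.toBlocks₂₁ - 1) ((2:F) • X.toBlocks₂₂)
        (-((2:F) • X.toBlocks₁₁)) (-((2:F) • X.toBlocks₁₂) - 1) := by
    rw [hM, ← fromBlocks_one, fromBlocks_sub']; simp
  have hv_b : (2:F) • (Jmat n F * X) + 1
      = fromBlocks ((2:F) • X.toBlocks₂₁ + 1) ((2:F) • X.toBlocks₂₂)
        (-((2:F) • X.toBlocks₁₁)) (-((2:F) • X.toBlocks₁₂) + 1) := by
    rw [hM, ← fromBlocks_one, fromBlocks_add]; simp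
  have huh' : fromBlocks ((2:F) • X.toBlocks₂₁ - 1) ((2:F) • X.toBlocks₂₂)
        (-((2:F) • X.toBlocks₁₁)) (-((2:F) • X.toBlocks₁₂) - 1)
      * fromBlocks (h.toBlocks₁₁) (h.toBlocks₁₂) (h.toBlocks₂₁) (h.toBlocks₂₂)
      = fromBlocks ((2:F) • X.toBlocks₂₁ + 1) ((2:F) • X.toBlocks₂₂)
        (-((2:F) • X.toBlocks₁₁)) (-((2:F) • X.toBlocks₁₂) + 1) := by
    rw [fromBlocks_toBlocks, ← hu_b, ← hv_b]; exact huh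
  rw [fromBlocks_multiply, fromBlocks_inj] at huh'
  simp only [sub_mul, add_mul, smul_mul_assoc, neg_mul, one_mul, sub_zero, zero_sub,
    add_zero, zero_add] at huh'
  obtain ⟨r5, r6, r7, r8⟩ := huh'
  -- expand everything
  rw [wDelta, Ginv, nstd, g0, Qmat, emb]
  conv_lhs => rw [← fromBlocks_toBlocks X]
  simp only [← fromBlocks_one]
  simp [fromBlocks_multiply, fromBlocks_add, smul_mul_assoc, mul_smul_comm,
    sub_mul, mul_sub, add_mul, mul_add, smul_smul, smul_sub, smul_add,
    neg_add, neg_sub, fromBlocks_inj, -fromBlocks_one]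
  refine ⟨⟨?_, ?_, ?_, ?_⟩, ⟨?_, ?_, ?_, ?_⟩, ⟨?_, ?_, ?_, ?_⟩, ⟨?_, ?_, ?_, ?_⟩⟩
  · linear_combination (norm := module) (-(2:F)⁻¹) • r1 - (2:F)⁻¹ • r5
  · module
  · linear_combination (norm := module) ((2:F)⁻¹) • r1 - (2:F)⁻¹ • r5
  · module
  · linear_combination (norm := module) (-(2:F)⁻¹) • r2 - (2:F)⁻¹ • r6
  · module
  · linear_combination (norm := module) ((2:F)⁻¹) • r2 - (2:F)⁻¹ • r6
  · module
  · linear_combination (norm := module) (-(2:F)⁻¹) • r3 - (2:F)⁻¹ • r7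
  · module
  · linear_combination (norm := module) (-(2:F)⁻¹) • r3 + (2:F)⁻¹ • r7
  · module
  · linear_combination (norm := module) (-(2:F)⁻¹) • r4 - (2:F)⁻¹ • r8
  · module
  · linear_combination (norm := module) (-(2:F)⁻¹) • r4 + (2:F)⁻¹ • r8
  · module

theorem sympl_Ginv [CharZero F] : Ginv n F * JW n F * (Ginv n F)ᵀ = JW n F := by
  rw [Ginv, JW]
  simp only [← fromBlocks_one]
  simp [fromBlocks_multiply, fromBlocks_transpose, fromBlocks_neg, fromBlocks_add,
    fromBlocks_inj, smul_smul, half_add_half, neg_half_add_neg_half, transpose_smul,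
    negone_blocks]

theorem sympl_emb (h : Matrix (Fin n ⊕ Fin n) (Fin n ⊕ Fin n) F)
    (hs : h * Jmat n F * hᵀ = Jmat n F) :
    emb n F h * JW n F * (emb n F h)ᵀ = JW n F := by
  have hs' : fromBlocks (h.toBlocks₁₁) (h.toBlocks₁₂) (h.toBlocks₂₁) (h.toBlocks₂₂)
      * fromBlocks 0 1 (-1) 0
      * (fromBlocks (h.toBlocks₁₁) (h.toBlocks₁₂) (h.toBlocks₂₁) (h.toBlocks₂₂))ᵀ
      = fromBlocks 0 1 (-1) 0 := by
    rw [fromBlocks_toBlocks]; exact hs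
  rw [fromBlocks_transpose, fromBlocks_multiply, fromBlocks_multiply,
    fromBlocks_inj] at hs'
  obtain ⟨s1, s2, s3, s4⟩ := hs'
  simp only [mul_zero, zero_mul, mul_one, mul_neg, neg_mul, zero_add, add_zero,
    mul_neg_one, neg_neg] at s1 s2 s3 s4
  rw [emb, JW]
  simp [fromBlocks_multiply, fromBlocks_transpose, fromBlocks_neg, fromBlocks_add,
    fromBlocks_inj, -fromBlocks_zero, ← fromBlocks_zero, -fromBlocks_one,
    ← fromBlocks_one, ← negone_blocks]
  repeat' apply And.intro
  all_goals
    first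
      | module
      | linear_combination (norm := module) s1
      | linear_combination (norm := module) s2
      | linear_combination (norm := module) s3
      | linear_combination (norm := module) s4
      | linear_combination (norm := module) -s1
      | linear_combination (norm := module) -s2
      | linear_combination (norm := module) -s3
      | linear_combination (norm := module) -s4

theorem sympl_mul (A B : Matrix ((Fin n ⊕ Fin n) ⊕ (Fin n ⊕ Fin n))
      ((Fin n ⊕ Fin n) ⊕ (Fin n ⊕ Fin n)) F)
    (hA : A * JW n F * Aᵀ = JW n F) (hB : B * JW n F * Bᵀ = JW n F) :
    (A * B) * JW n F * (A * B)ᵀ = JW n F := by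
  calc A * B * JW n F * (A * B)ᵀ
      = A * (B * JW n F * Bᵀ) * Aᵀ := by rw [transpose_mul]; simp only [mul_assoc]
    _ = JW n F := by rw [hB, hA]


/-- **The birational morphism `C : w_Δ N_Δ → Sp_{2n}` is the classical Cayley
transform.** -/
theorem doubling_decomposition_is_cayley_transform
    -- `F` is a field of characteristic zero, `n ≥ 1`
    (F : Type*) [Field F] [CharZero F] (n : ℕ) (hn : 1 ≤ n)
    -- `X ∈ Sym²(F^{2n})`, written via `n_std = (I_{2n}, X; 0, I_{2n})` and
    -- `n_Δ = g₀^{-1} n_std g₀ ∈ N_Δ(F)`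
    (X : Matrix (Fin n ⊕ Fin n) (Fin n ⊕ Fin n) F) (hX : Xᵀ = X)
    -- whenever `2 J_n X − I_{2n}` is invertible
    (hinv : IsUnit ((2 : F) • (Jmat n F * X) - 1)) :
    -- `h = (2 J_n X + I_{2n})(2 J_n X − I_{2n})^{-1}` lies in `Sp_{2n}(F)`, and
    cayley n F X * Jmat n F * (cayley n F X)ᵀ = Jmat n F ∧
    -- the decomposition `w_Δ n_Δ = p_Δ · (h, I_{2n})` holds with some `p_Δ ∈ P_Δ(F)`,
    -- where `P_Δ(F) = g₀^{-1} P_std(F) g₀` is the Siegel parabolic stabilizing the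
    -- diagonal Lagrangian (membership: `g₀ p_Δ g₀^{-1}` is symplectic with vanishing
    -- lower-left `2n × 2n` block)
    ∃ pΔ : Matrix ((Fin n ⊕ Fin n) ⊕ (Fin n ⊕ Fin n))
        ((Fin n ⊕ Fin n) ⊕ (Fin n ⊕ Fin n)) F,
      pΔ * JW n F * pΔᵀ = JW n F ∧
      (g0 n F * pΔ * (g0 n F)⁻¹).toBlocks₂₁ = 0 ∧
      wDelta n F * ((g0 n F)⁻¹ * nstd n F X * g0 n F) = pΔ * emb n F (cayley n F X) := by
  have hsymp := cayley_symplectic hX hinv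
  have hg0G := g0_mul_Ginv (n := n) (F := F)
  have hg0inv : (g0 n F)⁻¹ = Ginv n F := Matrix.inv_eq_right_inv hg0G
  have heq3 := eq3 hX hinv
  refine ⟨hsymp, Ginv n F * Qmat n F X (cayley n F X)⁻¹ * g0 n F, ?_, ?_, ?_⟩
  · have hW : (wDelta n F * (Ginv n F * nstd n F X * g0 n F)) * JW n F
        * (wDelta n F * (Ginv n F * nstd n F X * g0 n F))ᵀ = JW n F :=
      sympl_mul _ _ (sympl_wDelta n F)
        (sympl_mul _ _ (sympl_mul _ _ sympl_Ginv (sympl_nstd n F X hX)) (sympl_g0 n F))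
    have hE := sympl_emb (cayley n F X) hsymp
    calc Ginv n F * Qmat n F X (cayley n F X)⁻¹ * g0 n F * JW n F
          * (Ginv n F * Qmat n F X (cayley n F X)⁻¹ * g0 n F)ᵀ
        = Ginv n F * Qmat n F X (cayley n F X)⁻¹ * g0 n F
            * (emb n F (cayley n F X) * JW n F * (emb n F (cayley n F X))ᵀ)
            * (Ginv n F * Qmat n F X (cayley n F X)⁻¹ * g0 n F)ᵀ := by rw [hE]
      _ = (Ginv n F * Qmat n F X (cayley n F X)⁻¹ * g0 n F * emb n F (cayley n F X))
            * JW n F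
            * (Ginv n F * Qmat n F X (cayley n F X)⁻¹ * g0 n F
              * emb n F (cayley n F X))ᵀ := by
          simp only [transpose_mul, mul_assoc]
      _ = (wDelta n F * (Ginv n F * nstd n F X * g0 n F)) * JW n F
            * (wDelta n F * (Ginv n F * nstd n F X * g0 n F))ᵀ := by rw [← heq3]
      _ = JW n F := hW
  · rw [hg0inv]
    have hQ : g0 n F * (Ginv n F * Qmat n F X (cayley n F X)⁻¹ * g0 n F) * Ginv n F
        = Qmat n F X (cayley n F X)⁻¹ := by
      simp only [← mul_assoc]
      rw [hg0G, one_mul, mul_assoc, hg0G, mul_one]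
    rw [hQ, Qmat, toBlocks_fromBlocks₂₁]
  · rw [hg0inv]; exact heq3

end JLZ18
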